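/- Let L/K be a finite H-Galois extension and L0 an intermediate field. Then for an element h ∈ H the following two conditions are equivalent: (i) for all x ∈ L0, Σ α(h_(1))(x) ⊗ h_(2) = x ⊗ h in L ⊗_K H (where Δ(h) = Σ h_(1) ⊗ h_(2)); (ii) α(h) is L0-linear, i.e. α(h)(c·y) = c·α(h)(y) for all c ∈ L0 and all y ∈ L. -/

import Mathlib

open TensorProduct

section Defs

variable (K L H : Type) [Field K] [Field L] [Algebra K L] [Ring H] [Bialgebra K H]

/-- `L` is a left `H`-module algebra via `α`. -/
def IsModuleAlgebra (α : H →ₐ[K] Module.End K L) : Prop :=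
  (∀ h : H, α h 1 = Coalgebra.counit (R := K) h • (1 : L)) ∧
  ∀ h : H,
    (α h : L →ₗ[K] L) ∘ₗ LinearMap.mul' K L =
      LinearMap.mul' K L ∘ₗ
        TensorProduct.homTensorHomMap (RingHom.id K) L L L L
          (TensorProduct.map (α.toLinearMap : H →ₗ[K] (L →ₗ[K] L))
            (α.toLinearMap : H →ₗ[K] (L →ₗ[K] L)) (Coalgebra.comul (R := K) h))

noncomputable def lsmulLift (V M : Type) [AddCommGroup V] [Module K V] [AddCommGroup M]
    [Module K M] [Module L M] [IsScalarTower K L M] [SMulCommClass K L M]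
    (φ : V →ₗ[K] M) : L ⊗[K] V →ₗ[K] M :=
  TensorProduct.lift
    (LinearMap.mk₂ K (fun (x : L) (v : V) => x • φ v)
      (fun x x' v => add_smul x x' (φ v))
      (fun c x v => smul_assoc c x (φ v))
      (fun x v v' => by rw [map_add, smul_add])
      (fun c x v => by rw [map_smul, smul_comm]))

/-- The canonical (Galois) map `L ⊗[K] H →ₗ[K] End_K(L)`, `x ⊗ h ↦ (y ↦ x * α h y)`. -/
noncomputable def canMap (α : H →ₐ[K] Module.End K L) : L ⊗[K] H →ₗ[K] (L →ₗ[K] L) :=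
  lsmulLift K L H (L →ₗ[K] L) (α.toLinearMap : H →ₗ[K] (L →ₗ[K] L))

/-- The annihilator `J(L0)` of an intermediate field. -/
def Jann (α : H →ₐ[K] Module.End K L) (L0 : IntermediateField K L) : Submodule K H where
  carrier := {h : H | ∀ x ∈ L0, α h x = 0}
  add_mem' := by
    intro a b ha hb x hx
    simp [map_add, LinearMap.add_apply, ha x hx, hb x hx]
  zero_mem' := by intro x hx; simp
  smul_mem' := by
    intro c a ha x hx
    simp [map_smul, LinearMap.smul_apply, ha x hx]

/-- The map `H →ₗ[K] Hom_K(L0, L)`, `h ↦ (α h)|_{L0}`. -/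
def resMap (α : H →ₐ[K] Module.End K L) (L0 : IntermediateField K L) :
    H →ₗ[K] (↥L0 →ₗ[K] L) where
  toFun h := (α h : L →ₗ[K] L) ∘ₗ L0.val.toLinearMap
  map_add' h h' := by ext x; simp
  map_smul' c h := by ext x; simp

lemma Jann_le_ker (α : H →ₐ[K] Module.End K L) (L0 : IntermediateField K L) :
    Jann K L H α L0 ≤ LinearMap.ker (resMap K L H α L0) := by
  intro h hh
  rw [LinearMap.mem_ker]
  ext x
  exact hh x x.2

/-- The induced canonical map `L ⊗[K] (H / J(L0)) →ₗ[K] Hom_K(L0, L)`. -/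
noncomputable def can0 (α : H →ₐ[K] Module.End K L) (L0 : IntermediateField K L) :
    L ⊗[K] (H ⧸ Jann K L H α L0) →ₗ[K] (↥L0 →ₗ[K] L) :=
  lsmulLift K L (H ⧸ Jann K L H α L0) (↥L0 →ₗ[K] L)
    ((Jann K L H α L0).liftQ (resMap K L H α L0) (Jann_le_ker K L H α L0))

/-- `L0` is an `H`-subextension: the induced canonical map is injective. -/
def IsHSubextension (α : H →ₐ[K] Module.End K L) (L0 : IntermediateField K L) : Prop :=
  Function.Injective (can0 K L H α L0)

end Defs

section Statement

variable (K L H : Type) [Field K] [Field L] [Algebra K L] [Ring H] [Bialgebra K H]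

lemma canMap_tmul (α : H →ₐ[K] Module.End K L) (x : L) (a : H) (y : L) :
    canMap K L H α (x ⊗ₜ[K] a) y = x * α a y := by
  simp [canMap, lsmulLift, smul_eq_mul]

lemma canMap_key (α : H →ₐ[K] Module.End K L) (x y : L) (t : H ⊗[K] H) :
    canMap K L H α
        (TensorProduct.map ((α.toLinearMap : H →ₗ[K] (L →ₗ[K] L)).flip x)
          (LinearMap.id : H →ₗ[K] H) t) y =
      LinearMap.mul' K L
        (TensorProduct.homTensorHomMap (RingHom.id K) L L L L
          (TensorProduct.map (α.toLinearMap : H →ₗ[K] (L →ₗ[K] L))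
            (α.toLinearMap : H →ₗ[K] (L →ₗ[K] L)) t) (x ⊗ₜ[K] y)) := by
  induction t using TensorProduct.induction_on with
  | zero => simp
  | tmul a b => simp [canMap_tmul]
  | add u v hu hv => simp [map_add, LinearMap.add_apply, hu, hv]

lemma alpha_mul (α : H →ₐ[K] Module.End K L) (hMA : IsModuleAlgebra K L H α)
    (h : H) (x y : L) :
    α h (x * y) =
      LinearMap.mul' K L
        (TensorProduct.homTensorHomMap (RingHom.id K) L L L L
          (TensorProduct.map (α.toLinearMap : H →ₗ[K] (L →ₗ[K] L))
            (α.toLinearMap : H →ₗ[K] (L →ₗ[K] L)) (Coalgebra.comul (R := K) h))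
          (x ⊗ₜ[K] y)) := by
  have := LinearMap.congr_fun (hMA.2 h) (x ⊗ₜ[K] y)
  simpa using this

/-- For a finite `H`-Galois extension `L/K`, an intermediate field `L0` and `h ∈ H`:
`Σ α(h₍₁₎)(x) ⊗ h₍₂₎ = x ⊗ h` for all `x ∈ L0` iff `α h` is `L0`-linear. -/
theorem sweedler_eq_iff_L0Linear [FiniteDimensional K L] [FiniteDimensional K H]
    (α : H →ₐ[K] Module.End K L) (hMA : IsModuleAlgebra K L H α)
    (hGal : Function.Bijective (canMap K L H α))
    (L0 : IntermediateField K L) (h : H) :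
    (∀ x ∈ L0,
        TensorProduct.map ((α.toLinearMap : H →ₗ[K] (L →ₗ[K] L)).flip x)
            (LinearMap.id : H →ₗ[K] H) (Coalgebra.comul (R := K) h) =
          x ⊗ₜ[K] h) ↔
      (∀ c ∈ L0, ∀ y : L, α h (c * y) = c * α h y) := by
  constructor
  · intro hi c hc y
    have := congrArg (fun t => canMap K L H α t y) (hi c hc)
    simpa [canMap_key, canMap_tmul, ← alpha_mul K L H α hMA] using this
  · intro hii x hx
    apply hGal.1
    ext y
    rw [canMap_key, canMap_tmul, ← alpha_mul K L H α hMA, hii x hx y]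

end Statement
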